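/- arXiv:math/0407270 — 2 statements merged into one kernel-verified Lean document; each statement's English description precedes it below -/
import Mathlib

section
/- Let R be a commutative Noetherian ring. Then R is Artinian if and only if every R-module is semi co-Hopfian. -/
open Function

universe u v w

def SemiCoHopfian (R : Type u) (M : Type v) [CommRing R] [AddCommGroup M]
    [Module R M] : Prop :=
  ∀ x : R, Function.Injective (fun m : M => x • m) → Function.Bijective (fun m : M => x • m)

private lemma pow_smul_injective {R : Type u} {M : Type v} [CommRing R] [AddCommGroup M]
    [Module R M] {x : R} (h : Function.Injective (fun m : M => x • m)) (n : ℕ) :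
    Function.Injective (fun m : M => x ^ n • m) := by
  induction n with
  | zero => simp only [pow_zero, one_smul]; exact fun a b hab => hab
  | succ n ih =>
    intro a b hab
    simp only [pow_succ, mul_smul] at hab
    exact h (ih hab)

/-- If a product of maximal ideals kills a Noetherian module, the module is Artinian. -/
private lemma artinian_of_prod_maximal_smul_eq_bot {R : Type u} [CommRing R]
    (s : Multiset (Ideal R)) (hs : ∀ I ∈ s, I.IsMaximal) :
    ∀ (M : Type v) [AddCommGroup M] [Module R M] [IsNoetherian R M],
      s.prod • (⊤ : Submodule R M) = ⊥ → IsArtinian R M := by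
  induction s using Multiset.induction with
  | empty =>
    intro M _ _ _ h
    simp only [Multiset.prod_zero, Ideal.one_eq_top, Submodule.top_smul] at h
    have : Subsingleton M := by
      refine subsingleton_of_forall_eq 0 fun m => ?_
      have : m ∈ (⊥ : Submodule R M) := h ▸ Submodule.mem_top
      simpa using this
    infer_instance
  | cons I t ih =>
    intro M _ _ _ h
    have hI : I.IsMaximal := hs I (Multiset.mem_cons_self I t)
    have ht : ∀ J ∈ t, J.IsMaximal := fun J hJ => hs J (Multiset.mem_cons_of_mem hJ)
    rw [Multiset.prod_cons] at h
    set N : Submodule R M := t.prod • ⊤ with hN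
    -- The quotient M ⧸ N is killed by t.prod
    have hquot : t.prod • (⊤ : Submodule R (M ⧸ N)) = ⊥ := by
      have : (⊤ : Submodule R (M ⧸ N)) = Submodule.map N.mkQ ⊤ := by
        rw [Submodule.map_top, Submodule.range_mkQ]
      rw [this, ← Submodule.map_smul'', eq_bot_iff]
      rintro q hq
      obtain ⟨m, hm, rfl⟩ := hq
      simpa [Submodule.mem_bot, Submodule.Quotient.mk_eq_zero] using hm
    have hQ : IsArtinian R (M ⧸ N) := ih ht (M ⧸ N) hquot
    -- N is killed by I, hence a finite-dimensional vector space over R ⧸ I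
    have hIN : I • N = ⊥ := by
      rw [hN, ← mul_smul, h]
    have htor : Module.IsTorsionBySet R N ↑I := by
      intro n a
      have : (a : R) • (n : M) ∈ I • N := Submodule.smul_mem_smul a.2 n.2
      rw [hIN] at this
      exact Subtype.ext (by simpa using this)
    letI : Module (R ⧸ I) N := htor.module
    letI : Field (R ⧸ I) := Ideal.Quotient.field I
    haveI : IsScalarTower R (R ⧸ I) N := htor.isScalarTower
    haveI : Module.Finite R N := Module.Finite.iff_fg.mpr (IsNoetherian.noetherian N)
    haveI : Module.Finite (R ⧸ I) N := Module.Finite.of_restrictScalars_finite R (R ⧸ I) N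
    haveI : IsArtinianRing (R ⧸ I) := DivisionRing.instIsArtinianRing
    haveI hart' : IsArtinian (R ⧸ I) N := isArtinian_of_fg_of_artinian'
    -- transfer Artinian-ness along the surjection R → R ⧸ I
    let toQ : Submodule R N → Submodule (R ⧸ I) N := fun W =>
      { carrier := W
        add_mem' := fun ha hb => W.add_mem ha hb
        zero_mem' := W.zero_mem
        smul_mem' := by
          intro a n hn
          obtain ⟨r, rfl⟩ := Ideal.Quotient.mk_surjective a
          have : (Ideal.Quotient.mk I r) • n = r • n := htor.mk_smul r n
          rw [this]
          exact W.smul_mem r hn }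
    have hmono : ∀ {a b : Submodule R N}, a < b → toQ a < toQ b := by
      intro a b hab
      exact SetLike.lt_iff_le_and_exists.mpr
        ⟨fun x hx => hab.le hx, by
          obtain ⟨x, hxb, hxa⟩ := SetLike.exists_of_lt hab
          exact ⟨x, hxb, hxa⟩⟩
    have hNart : IsArtinian R N :=
      ⟨Subrelation.wf (fun {a b} hab => hmono hab) (InvImage.wf toQ hart'.wf)⟩
    exact isArtinian_of_range_eq_ker N.subtype N.mkQ
      (by rw [Submodule.ker_mkQ, Submodule.range_subtype])

theorem artinian_iff_forall_semiCoHopfian (R : Type u) [CommRing R]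
    [IsNoetherianRing R] :
    IsArtinianRing R ↔
      ∀ (M : Type u) [AddCommGroup M] [Module R M], SemiCoHopfian R M := by
  constructor
  · -- Artinian ⇒ every module semi co-Hopfian
    intro hart M _ _ x hinj
    refine ⟨hinj, ?_⟩
    -- the chain of ideals (x^n) stabilizes
    have : ∃ n : ℕ, Ideal.span {x ^ n} = Ideal.span {x ^ (n + 1)} := by
      obtain ⟨n, hn⟩ := IsArtinian.monotone_stabilizes (R := R) (M := R)
        ⟨fun n => OrderDual.toDual (Ideal.span {x ^ n}), by
          intro a b hab
          exact Ideal.span_singleton_le_span_singleton.mpr (pow_dvd_pow x hab)⟩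
      exact ⟨n, congrArg OrderDual.ofDual (hn (n + 1) (Nat.le_succ n))⟩
    obtain ⟨n, hn⟩ := this
    have hx : x ^ n ∈ Ideal.span {x ^ (n + 1)} := hn ▸ Ideal.subset_span rfl
    obtain ⟨c, hc⟩ := Ideal.mem_span_singleton'.mp hx
    intro m
    refine ⟨c • m, ?_⟩
    apply pow_smul_injective hinj n
    show x ^ n • x • c • m = x ^ n • m
    have hxc : x ^ n * x * c = x ^ n := by
      conv_rhs => rw [← hc]
      ring
    rw [← mul_smul, ← mul_smul, hxc]
  · -- every module semi co-Hopfian ⇒ Artinian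
    intro H
    -- Step 1: every prime ideal is maximal
    have hmax : ∀ p : Ideal R, p.IsPrime → p.IsMaximal := by
      intro p hp
      apply Ideal.Quotient.maximal_of_isField
      refine ⟨⟨0, 1, zero_ne_one⟩, mul_comm, ?_⟩
      intro a ha
      obtain ⟨x, rfl⟩ := Ideal.Quotient.mk_surjective a
      have hx : x ∉ p := fun hxp => ha (Ideal.Quotient.eq_zero_iff_mem.mpr hxp)
      have hinj : Function.Injective (fun m : R ⧸ p => x • m) := by
        intro u v huv
        simp only at huv
        have hsmul : ∀ w : R ⧸ p, x • w = Ideal.Quotient.mk p x * w := fun w => by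
          rw [← Ideal.Quotient.algebraMap_eq, ← Algebra.smul_def]
        have h1 : Ideal.Quotient.mk p x * u = Ideal.Quotient.mk p x * v := by
          rw [← hsmul, ← hsmul]; exact huv
        have h2 : Ideal.Quotient.mk p x ≠ 0 := fun h0 =>
          hx (Ideal.Quotient.eq_zero_iff_mem.mp h0)
        exact mul_left_cancel₀ h2 h1
      obtain ⟨m, hm⟩ := (H (R ⧸ p) x hinj).2 1
      have hsmul : x • m = Ideal.Quotient.mk p x * m := by
        rw [← Ideal.Quotient.algebraMap_eq, ← Algebra.smul_def]
      exact ⟨m, by rw [← hsmul]; exact hm⟩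
    -- Step 2: a product of primes (hence maximal ideals) is ⊥
    obtain ⟨Z, hZ⟩ := PrimeSpectrum.exists_primeSpectrum_prod_le R ⊥
    have hZbot : (Z.map PrimeSpectrum.asIdeal).prod = ⊥ := le_bot_iff.mp hZ
    refine artinian_of_prod_maximal_smul_eq_bot (Z.map PrimeSpectrum.asIdeal) ?_ R ?_
    · intro I hI
      obtain ⟨q, _, rfl⟩ := Multiset.mem_map.mp hI
      exact hmax q.asIdeal q.2
    · rw [hZbot]
      simp
end

section
/- Let R be a commutative Noetherian ring. Then R is Artinian if and only if every nonzero R-module is Laskerian. -/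
open Function

universe u v w

def IsPrimarySubmodule {R : Type u} [CommRing R] {M : Type v} [AddCommGroup M]
    [Module R M] (Q : Submodule R M) : Prop :=
  Q ≠ ⊤ ∧ ∀ x : R,
    Function.Injective (fun m : M ⧸ Q => x • m) ∨ ∃ n : ℕ, ∀ m : M ⧸ Q, x ^ n • m = 0

def Laskerian (R : Type u) (M : Type v) [CommRing R] [AddCommGroup M] [Module R M] : Prop :=
  ∀ N : Submodule R M, N ≠ ⊤ → ∃ (k : ℕ) (Q : Fin k → Submodule R M),
    (∀ i, IsPrimarySubmodule (Q i)) ∧ (⨅ i, Q i) = N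

section Helpers

variable {R : Type u} [CommRing R] {M : Type v} [AddCommGroup M] [Module R M]

/-- The submodule `{m | ∀ r ∈ I, r • m ∈ N}`. -/
def qsat (N : Submodule R M) (I : Ideal R) : Submodule R M where
  carrier := {m | ∀ r ∈ I, r • m ∈ N}
  add_mem' := by
    intro a b ha hb r hr
    rw [smul_add]; exact N.add_mem (ha r hr) (hb r hr)
  zero_mem' := by
    intro r hr
    rw [smul_zero]; exact N.zero_mem
  smul_mem' := by
    intro c m hm r hr
    rw [smul_comm]; exact N.smul_mem c (hm r hr)

lemma mem_qsat {N : Submodule R M} {I : Ideal R} {m : M} :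
    m ∈ qsat N I ↔ ∀ r ∈ I, r • m ∈ N := Iff.rfl

lemma injective_smul_quotient (Q : Submodule R M) (x : R)
    (h : ∀ m : M, x • m ∈ Q → m ∈ Q) :
    Function.Injective (fun m : M ⧸ Q => x • m) := by
  intro a b hab
  obtain ⟨a, rfl⟩ := Submodule.Quotient.mk_surjective Q a
  obtain ⟨b, rfl⟩ := Submodule.Quotient.mk_surjective Q b
  simp only [← Submodule.Quotient.mk_smul] at hab
  rw [Submodule.Quotient.eq] at hab ⊢
  exact h _ (by rwa [← smul_sub] at hab)

lemma list_prod_le_of_mem : ∀ {l : List (Ideal R)} {I : Ideal R}, I ∈ l → l.prod ≤ I := by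
  intro l
  induction l with
  | nil => intro I h; cases h
  | cons J l ih =>
    intro I h
    rw [List.prod_cons]
    rcases List.mem_cons.mp h with rfl | h
    · exact Ideal.mul_le_left
    · exact le_trans Ideal.mul_le_right (ih h)

lemma sum_smul_mem {ι : Type w} {s : Finset ι} {c : ι → Ideal R} {x : M} {N : Submodule R M}
    (h : ∀ i ∈ s, ∀ r ∈ c i, r • x ∈ N) : ∀ r ∈ (∑ i ∈ s, c i), r • x ∈ N := by
  classical
  induction s using Finset.induction_on with
  | empty =>
    intro r hr
    simp only [Finset.sum_empty] at hr
    have hr0 : r = 0 := by simpa using hr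
    rw [hr0, zero_smul]
    exact N.zero_mem
  | @insert a s ha ih =>
    intro r hr
    rw [Finset.sum_insert ha] at hr
    obtain ⟨y, hy, z, hz, rfl⟩ := Submodule.mem_sup.mp hr
    rw [add_smul]
    exact N.add_mem (h a (Finset.mem_insert_self a s) y hy)
      (ih (fun i hi => h i (Finset.mem_insert_of_mem hi)) z hz)

/-- A Noetherian module killed by a maximal ideal is Artinian. -/
lemma isArtinian_of_noetherian_of_maximal_torsion
    [IsNoetherian R M] (I : Ideal R) (hI : I.IsMaximal)
    (h : ∀ r ∈ I, ∀ x : M, r • x = (0 : M)) : IsArtinian R M := by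
  haveI := hI
  have htor : Module.IsTorsionBySet R M I := fun x a => h a.1 a.2 x
  letI : Module (R ⧸ I) M := htor.module
  haveI : IsScalarTower R (R ⧸ I) M := htor.isScalarTower
  letI : Field (R ⧸ I) := Ideal.Quotient.field I
  haveI hNoe : IsNoetherian (R ⧸ I) M := isNoetherian_of_tower R inferInstance
  haveI : Module.Finite (R ⧸ I) M := ⟨IsNoetherian.noetherian ⊤⟩
  haveI hart : IsArtinian (R ⧸ I) M := inferInstance
  rw [isArtinian_iff]
  have wf := (isArtinian_iff (R ⧸ I) M).mp hart
  let g : Submodule R M → Submodule (R ⧸ I) M := fun N =>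
    { carrier := N
      add_mem' := fun ha hb => N.add_mem ha hb
      zero_mem' := N.zero_mem
      smul_mem' := by
        intro c x hx
        obtain ⟨r, rfl⟩ := Ideal.Quotient.mk_surjective c
        have hmk : (Ideal.Quotient.mk I r) • x = r • x := htor.mk_smul r x
        rw [hmk]
        exact N.smul_mem r hx }
  have hg : ∀ {a b : Submodule R M}, a < b → g a < g b := by
    intro a b hab
    rcases SetLike.lt_iff_le_and_exists.mp hab with ⟨hle, x, hxb, hxa⟩
    exact SetLike.lt_iff_le_and_exists.mpr ⟨hle, x, hxb, hxa⟩
  exact Subrelation.wf (fun {a b} hab => hg hab) (InvImage.wf g wf)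

/-- A Noetherian module killed by a finite product of maximal ideals is Artinian. -/
lemma isArtinian_of_maximal_list_prod :
    ∀ (l : List (Ideal R)), (∀ I ∈ l, I.IsMaximal) →
      ∀ (M : Type v) [AddCommGroup M] [Module R M], IsNoetherian R M →
        (∀ r ∈ l.prod, ∀ x : M, r • x = (0 : M)) → IsArtinian R M := by
  intro l
  induction l with
  | nil =>
    intro _ M _ _ _ h
    haveI : Subsingleton M := ⟨fun a b => by
      have := h 1 (by simp) (a - b)
      rwa [one_smul, sub_eq_zero] at this⟩
    infer_instance
  | cons J l ih =>
    intro hmax M _ _ hNoeth h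
    haveI := hNoeth
    set N : Submodule R M := J • (⊤ : Submodule R M) with hN
    have hNart : IsArtinian R N := by
      apply ih (fun I hI => hmax I (List.mem_cons_of_mem _ hI)) N inferInstance
      intro r hr x
      apply Subtype.ext
      show r • (x : M) = 0
      refine Submodule.smul_induction_on x.2 (fun a ha y _ => ?_) (fun y z hy hz => ?_)
      · rw [smul_smul, mul_comm]
        exact h (a * r) (by rw [List.prod_cons]; exact Ideal.mul_mem_mul ha hr) y
      · rw [smul_add, hy, hz, add_zero]
    have hQart : IsArtinian R (M ⧸ N) := by
      apply isArtinian_of_noetherian_of_maximal_torsion J (hmax J (List.mem_cons_self (a := J) (l := l)))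
      intro r hrJ x
      obtain ⟨y, rfl⟩ := Submodule.Quotient.mk_surjective N x
      rw [← Submodule.Quotient.mk_smul, Submodule.Quotient.mk_eq_zero]
      exact Submodule.smul_mem_smul hrJ Submodule.mem_top
    exact (isArtinian_iff_submodule_quotient N).mpr ⟨hNart, hQart⟩

end Helpers

/-- Akizuki / Hopkins: a Noetherian ring in which every prime is maximal is Artinian. -/
lemma isArtinianRing_of_primes_maximal (R : Type u) [CommRing R] [IsNoetherianRing R]
    (H : ∀ p : Ideal R, p.IsPrime → p.IsMaximal) : IsArtinianRing R := by
  classical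
  have hsub : {I : Ideal R | I.IsPrime} ⊆ minimalPrimes R := by
    intro p hp
    haveI : p.IsPrime := hp
    obtain ⟨q, hq, hqp⟩ := Ideal.exists_minimalPrimes_le (bot_le : (⊥ : Ideal R) ≤ p)
    have hqprime : q.IsPrime := hq.1.1
    have : q = p := (H q hqprime).eq_of_le hp.ne_top hqp
    rwa [← this]
  have hfin : {I : Ideal R | I.IsPrime}.Finite :=
    (minimalPrimes.finite_of_isNoetherianRing R).subset hsub
  obtain ⟨k, hk⟩ := IsNoetherianRing.isNilpotent_nilradical R
  set S : Finset (Ideal R) := hfin.toFinset with hS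
  have hprodS : S.toList.prod ≤ nilradical R := by
    rw [nilradical_eq_sInf]
    refine le_sInf fun q hq => ?_
    exact list_prod_le_of_mem (by rw [Finset.mem_toList]; exact hfin.mem_toFinset.mpr hq)
  have hl : ∀ I ∈ (List.replicate k S.toList).flatten, I.IsMaximal := by
    intro I hI
    obtain ⟨l', hl', hI⟩ := List.mem_flatten.mp hI
    rw [List.eq_of_mem_replicate hl'] at hI
    exact H I (hfin.mem_toFinset.mp (Finset.mem_toList.mp hI))
  have hlprod : (List.replicate k S.toList).flatten.prod = ⊥ := by
    rw [List.prod_flatten, List.map_replicate, List.prod_replicate]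
    refine le_bot_iff.mp ?_
    calc S.toList.prod ^ k ≤ nilradical R ^ k := Ideal.pow_right_mono hprodS k
      _ = ⊥ := hk
  exact isArtinian_of_maximal_list_prod _ hl R inferInstance
    (fun r hr x => by rw [hlprod] at hr; rw [Ideal.mem_bot.mp hr, zero_smul])

theorem artinian_iff_forall_nontrivial_laskerian (R : Type u) [CommRing R]
    [IsNoetherianRing R] :
    IsArtinianRing R ↔
      ∀ (M : Type u) [AddCommGroup M] [Module R M], Nontrivial M → Laskerian R M := by
  classical
  constructor
  · -- Artinian implies every nontrivial module Laskerian
    intro hArt M _ _ hM N hN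
    haveI := hArt
    haveI := hM
    haveI : Nontrivial R := Module.nontrivial R M
    obtain ⟨n₀, hn₀⟩ := IsArtinianRing.isNilpotent_jacobson_bot (R := R)
    set n : ℕ := n₀ + 1 with hn
    have hJn : (Ideal.jacobson (⊥ : Ideal R)) ^ n = ⊥ := by
      rw [hn, pow_succ, hn₀]
      simp
    set MS : Finset (Ideal R) := (IsArtinianRing.setOfPred_isMaximal_finite R).toFinset with hMS
    have hMSmem : ∀ {I : Ideal R}, I ∈ MS ↔ I.IsMaximal := fun {I} =>
      (IsArtinianRing.setOfPred_isMaximal_finite R).mem_toFinset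
    have hprodbot : (∏ J ∈ MS, J ^ n) = ⊥ := by
      have h1 : (∏ J ∈ MS, J) ≤ Ideal.jacobson ⊥ := by
        rw [Ideal.jacobson]
        refine le_sInf ?_
        rintro m ⟨-, hm⟩
        calc (∏ J ∈ MS, J) = (∏ J ∈ MS.erase m, J) * m :=
              (Finset.prod_erase_mul MS _ (hMSmem.mpr hm)).symm
          _ ≤ m := Ideal.mul_le_right
      rw [Finset.prod_pow]
      exact le_bot_iff.mp (hJn ▸ Ideal.pow_right_mono h1 n)
    set c : Ideal R → Ideal R := fun I => ∏ J ∈ MS.erase I, J ^ n with hc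
    have hcmul : ∀ I ∈ MS, I ^ n * c I = ⊥ := by
      intro I hI
      rw [hc]
      rw [Finset.mul_prod_erase MS (fun J => J ^ n) hI]
      exact hprodbot
    set Q : Ideal R → Submodule R M := fun I => qsat N (c I) with hQdef
    have hNQ : ∀ I, N ≤ Q I := fun I m hm r hr => N.smul_mem r hm
    have hsum : (∑ I ∈ MS, c I) = ⊤ := by
      by_contra hne
      obtain ⟨m, hm, hle⟩ := Ideal.exists_le_maximal _ hne
      have hmMS : m ∈ MS := hMSmem.mpr hm
      have hcm : c m ≤ m :=
        le_trans (Finset.single_le_sum (f := c) (fun i _ => zero_le (a := c i)) hmMS) hle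
      obtain ⟨j, hj, hjle⟩ := (Ideal.IsPrime.prod_le hm.isPrime).mp hcm
      haveI := hm.isPrime
      have hjm : j ≤ m := (Ideal.IsPrime.pow_le_iff (Nat.succ_ne_zero n₀)).mp hjle
      have hjeq : j = m := (hMSmem.mp (Finset.mem_of_mem_erase hj)).eq_of_le hm.ne_top hjm
      exact Finset.ne_of_mem_erase hj hjeq
    have hInf : (⨅ I ∈ MS, Q I) = N := by
      refine le_antisymm ?_ (le_iInf fun I => le_iInf fun _ => hNQ I)
      intro x hx
      simp only [Submodule.mem_iInf] at hx
      have hmem : ∀ r ∈ (∑ I ∈ MS, c I), r • x ∈ N :=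
        sum_smul_mem (fun I hI r hr => hx I hI r hr)
      have := hmem 1 (by rw [hsum]; exact Submodule.mem_top)
      rwa [one_smul] at this
    set s : Finset (Ideal R) := MS.filter (fun I => Q I ≠ ⊤) with hs
    have hsMS : s ⊆ MS := Finset.filter_subset _ _
    have hQtop : ∀ I ∈ MS, I ∉ s → Q I = ⊤ := by
      intro I hI hIs
      by_contra hQt
      exact hIs (Finset.mem_filter.mpr ⟨hI, hQt⟩)
    have hInf2 : (⨅ I ∈ s, Q I) = N := by
      refine le_antisymm ?_ (le_iInf fun I => le_iInf fun _ => hNQ I)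
      rw [← hInf]
      intro x hx
      simp only [Submodule.mem_iInf] at hx ⊢
      intro I hI
      by_cases hIs : I ∈ s
      · exact hx I hIs
      · rw [hQtop I hI hIs]; exact Submodule.mem_top
    have hPrim : ∀ I ∈ s, IsPrimarySubmodule (Q I) := by
      intro I hIs
      obtain ⟨hIMS, hQne⟩ := Finset.mem_filter.mp hIs
      have hImax : I.IsMaximal := hMSmem.mp hIMS
      refine ⟨hQne, fun x => ?_⟩
      by_cases hx : x ∈ I
      · right
        refine ⟨n, fun m => ?_⟩
        obtain ⟨y, rfl⟩ := Submodule.Quotient.mk_surjective _ m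
        rw [← Submodule.Quotient.mk_smul, Submodule.Quotient.mk_eq_zero]
        rw [hQdef, mem_qsat]
        intro r hr
        have hzero : x ^ n * r = 0 := by
          have : x ^ n * r ∈ I ^ n * c I := Ideal.mul_mem_mul (Ideal.pow_mem_pow hx n) hr
          rw [hcmul I hIMS] at this
          exact Ideal.mem_bot.mp this
        rw [smul_smul, mul_comm r (x ^ n), hzero, zero_smul]
        exact N.zero_mem
      · left
        apply injective_smul_quotient
        intro m hm
        rw [hQdef, mem_qsat] at hm ⊢
        intro r hr
        have hsup : Ideal.span {x} ⊔ I ^ n = ⊤ := by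
          by_contra hne
          obtain ⟨m', hm', hle⟩ := Ideal.exists_le_maximal _ hne
          have h1 : x ∈ m' := hle (Submodule.mem_sup_left (Ideal.mem_span_singleton_self x))
          have h2 : I ^ n ≤ m' := le_trans le_sup_right hle
          haveI := hm'.isPrime
          have h3 : I ≤ m' := (Ideal.IsPrime.pow_le_iff (Nat.succ_ne_zero n₀)).mp h2
          have h4 : I = m' := hImax.eq_of_le hm'.ne_top h3
          exact hx (h4 ▸ h1)
        obtain ⟨y, hy, z, hz, hyz⟩ := Submodule.mem_sup.mp
          (hsup ▸ Submodule.mem_top : (1 : R) ∈ Ideal.span {x} ⊔ I ^ n)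
        obtain ⟨t, rfl⟩ := Ideal.mem_span_singleton'.mp hy
        have hzr : z * r = 0 := by
          have : z * r ∈ I ^ n * c I := Ideal.mul_mem_mul hz hr
          rw [hcmul I hIMS] at this
          exact Ideal.mem_bot.mp this
        have h1 : r • m = (t * x * r) • m + (z * r) • m := by
          rw [← add_smul, ← add_mul, hyz, one_mul]
        rw [h1, hzr, zero_smul]
        refine N.add_mem ?_ N.zero_mem
        have h2 : (t * x * r) • m = t • (r • (x • m)) := by
          rw [smul_smul, smul_smul]
          congr 1
          ring
        rw [h2]
        exact N.smul_mem t (hm r hr)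
    -- assemble
    have hcard : Fintype.card {x // x ∈ s} = s.card := Fintype.card_coe s
    obtain ⟨e⟩ : Nonempty ({x // x ∈ s} ≃ Fin s.card) := ⟨Fintype.equivFinOfCardEq hcard⟩
    refine ⟨s.card, fun i => Q ((e.symm i : {x // x ∈ s}) : Ideal R), ?_, ?_⟩
    · intro i
      exact hPrim _ (e.symm i).2
    · have h1 : (⨅ i : Fin s.card, Q ((e.symm i : {x // x ∈ s}) : Ideal R)) =
          ⨅ j : {x // x ∈ s}, Q (j : Ideal R) := Equiv.iInf_comp (g := fun j : {x // x ∈ s} => Q (j : Ideal R)) e.symm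
      rw [h1, iInf_subtype]
      exact hInf2
  · intro h
    refine isArtinianRing_of_primes_maximal R ?_
    intro p hp
    by_contra hnmax
    haveI : p.IsPrime := hp
    obtain ⟨mI, hmI, hpm⟩ := Ideal.exists_le_maximal p hp.ne_top
    have hne : p ≠ mI := fun e => hnmax (e ▸ hmI)
    obtain ⟨a, ham, hap⟩ : ∃ a, a ∈ mI ∧ a ∉ p := by
      obtain ⟨a, ha1, ha2⟩ := SetLike.exists_of_lt (lt_of_le_of_ne hpm hne)
      exact ⟨a, ha1, ha2⟩
    set D := R ⧸ p with hD
    set K := FractionRing D with hK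
    have hLask : Laskerian R K := h K inferInstance
    have hsmul : ∀ (r : R) (x : K), r • x = algebraMap D K (Ideal.Quotient.mk p r) * x := by
      intro r x
      rw [Algebra.smul_def, IsScalarTower.algebraMap_apply R D K, Ideal.Quotient.algebraMap_eq]
    have hinj : Function.Injective (algebraMap D K) := IsFractionRing.injective D K
    have halgne : ∀ {d : D}, d ≠ 0 → algebraMap D K d ≠ 0 := by
      intro d hd he
      exact hd (hinj (by rw [he, map_zero]))
    -- key: for primary Q, scalars outside p act injectively on K ⧸ Q
    have key : ∀ (Q : Submodule R K), IsPrimarySubmodule Q → ∀ r : R, r ∉ p →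
        ∀ y : K, r • y ∈ Q → y ∈ Q := by
      intro Q hQ r hr y hry
      have hu : algebraMap D K (Ideal.Quotient.mk p r) ≠ 0 :=
        halgne (fun e => hr (Ideal.Quotient.eq_zero_iff_mem.mp e))
      rcases hQ.2 r with hinj' | ⟨n, hn⟩
      · have h1 : (fun m : K ⧸ Q => r • m) (Submodule.Quotient.mk y) =
            (fun m : K ⧸ Q => r • m) 0 := by
          show r • (Submodule.Quotient.mk y : K ⧸ Q) = r • (0 : K ⧸ Q)
          rw [smul_zero, ← Submodule.Quotient.mk_smul, Submodule.Quotient.mk_eq_zero]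
          exact hry
        have := hinj' h1
        rwa [Submodule.Quotient.mk_eq_zero] at this
      · exfalso
        apply hQ.1
        rw [Submodule.eq_top_iff']
        intro z
        set u := algebraMap D K (Ideal.Quotient.mk p r) with hudef
        have hn' := hn (Submodule.Quotient.mk ((u ^ n)⁻¹ * z))
        rw [← Submodule.Quotient.mk_smul, Submodule.Quotient.mk_eq_zero] at hn'
        rw [hsmul, map_pow, map_pow] at hn'
        rwa [mul_inv_cancel_left₀ (pow_ne_zero n hu)] at hn'
    -- every primary submodule of K is ⊥
    have hbot : ∀ Q : Submodule R K, IsPrimarySubmodule Q → Q = ⊥ := by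
      intro Q hQ
      by_contra hQne
      obtain ⟨q, hqQ, hq0⟩ : ∃ q ∈ Q, q ≠ (0 : K) := by
        by_contra hcon
        push_neg at hcon
        exact hQne (le_antisymm (fun x hx => (Submodule.mem_bot R).mpr (hcon x hx)) bot_le)
      apply hQ.1
      rw [Submodule.eq_top_iff']
      intro y
      obtain ⟨⟨d, t⟩, hds⟩ := IsLocalization.surj (nonZeroDivisors D) (y * q⁻¹)
      obtain ⟨cc, hc⟩ := Ideal.Quotient.mk_surjective d
      obtain ⟨r, hrs⟩ := Ideal.Quotient.mk_surjective (t : D)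
      have hrp : r ∉ p := by
        intro hrp
        have ht0 : (t : D) = 0 := by rw [← hrs]; exact Ideal.Quotient.eq_zero_iff_mem.mpr hrp
        exact nonZeroDivisors.ne_zero t.2 ht0
      have key2 : algebraMap D K (t : D) * y = algebraMap D K d * q := by
        have := congrArg (fun w : K => w * q) hds
        simp only at this
        rw [← this]
        rw [mul_right_comm _ _ q, mul_assoc y, inv_mul_cancel₀ hq0, mul_one]
        ring
      have hry : r • y ∈ Q := by
        rw [hsmul, hrs, key2, ← hc, ← hsmul]
        exact Q.smul_mem cc hqQ
      exact key Q hQ r hrp y hry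
    -- the submodule given by the image of D in K
    set N : Submodule R K :=
      { carrier := Set.range (algebraMap D K)
        add_mem' := by
          rintro x y ⟨cx, rfl⟩ ⟨cy, rfl⟩
          exact ⟨cx + cy, map_add _ _ _⟩
        zero_mem' := ⟨0, map_zero _⟩
        smul_mem' := by
          rintro r x ⟨cx, rfl⟩
          exact ⟨Ideal.Quotient.mk p r * cx, by rw [map_mul, ← hsmul]⟩ } with hNdef
    have habar : (Ideal.Quotient.mk p a : D) ≠ 0 :=
      fun e => hap (Ideal.Quotient.eq_zero_iff_mem.mp e)
    have hNtop : N ≠ ⊤ := by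
      intro e
      have hmem : (algebraMap D K (Ideal.Quotient.mk p a))⁻¹ ∈ N := e ▸ Submodule.mem_top
      obtain ⟨b, hb⟩ := hmem
      obtain ⟨b', rfl⟩ := Ideal.Quotient.mk_surjective b
      have h1 : Ideal.Quotient.mk p (a * b') = 1 := by
        apply hinj
        rw [map_mul, map_one, map_mul, hb, mul_comm,
          inv_mul_cancel₀ (halgne habar)]
      have hmemp : a * b' - 1 ∈ p := by
        have := Ideal.Quotient.eq.mp (h1.trans (map_one (Ideal.Quotient.mk p)).symm)
        exact this
      have h2 : (1 : R) ∈ mI := by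
        have := mI.sub_mem (mI.mul_mem_right b' ham) (hpm hmemp)
        simpa using this
      exact hmI.ne_top ((Ideal.eq_top_iff_one mI).mpr h2)
    obtain ⟨k, Q, hQ, hiQ⟩ := hLask N hNtop
    have hQbot : ∀ i, Q i = ⊥ := fun i => hbot _ (hQ i)
    rcases Nat.eq_zero_or_pos k with rfl | hk
    · rw [iInf_of_empty] at hiQ
      exact hNtop hiQ.symm
    · have h1N : (1 : K) ∈ N := ⟨1, map_one _⟩
      have h1Q : (1 : K) ∈ Q ⟨0, hk⟩ := by
        rw [← hiQ] at h1N
        exact (Submodule.mem_iInf Q).mp h1N ⟨0, hk⟩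
      rw [hQbot] at h1Q
      exact one_ne_zero ((Submodule.mem_bot R).mp h1Q)
end
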